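/- A continued fraction [b₀,b₁,…] with integer coefficients converges if and only if there do not exist two distinct extended rationals u, w ∈ ℚ∞ that each appear infinitely many times in its sequence of convergents (v_n). -/

import Mathlib

open Filter Topology OnePoint

/-- The Möbius map `z ↦ b - 1/z` on the one-point compactification `ℝ∞` of `ℝ`. -/
noncomputable def mob (b : ℤ) (z : OnePoint ℝ) : OnePoint ℝ :=
  Option.elim z ((b : ℝ) : OnePoint ℝ)
    (fun x => if x = 0 then (∞ : OnePoint ℝ) else (((b : ℝ) - 1 / x : ℝ) : OnePoint ℝ))

/-- Value of a finite continued fraction `[b₀, …, b_m]`, i.e. `s₀(s₁(⋯ s_m(∞)))`. -/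
noncomputable def cfVal : List ℤ → OnePoint ℝ
  | [] => ∞
  | b :: t => mob b (cfVal t)

/-- The `n`th convergent `v_n = S_n(∞)` of the continued fraction `[b₀, b₁, …]`. -/
noncomputable def cfConv (b : ℕ → ℤ) (n : ℕ) : OnePoint ℝ :=
  cfVal ((List.range (n + 1)).map b)

/-- `m` is a positive index at which the coefficient is `0`, `1` or `-1`. -/
def badIdx (b : ℕ → ℤ) (m : ℕ) : Prop :=
  1 ≤ m ∧ (b m = 0 ∨ b m = 1 ∨ b m = -1)

instance (b : ℕ → ℤ) : DecidablePred (badIdx b) := fun m => by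
  unfold badIdx; infer_instance

-- The singularization map `Φ` on integer sequences.
open Classical in
noncomputable def Phi (b : ℕ → ℤ) : ℕ → ℤ :=
  if h : ∃ m, badIdx b m then
    let m := Nat.find h
    if b m = 0 then
      fun k => if k + 1 < m then b k
        else if k = m - 1 then b (m - 1) + b (m + 1)
        else b (k + 2)
    else if b m = 1 then
      fun k => if k + 1 < m then b k
        else if k = m - 1 then b (m - 1) - 1
        else if k = m then b (m + 1) - 1
        else b (k + 1)
    else
      fun k => if k + 1 < m then b k
        else if k = m - 1 then b (m - 1) + 1
        else if k = m then b (m + 1) + 1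
        else b (k + 1)
  else b

-- `p(b) ∈ ℕ ∪ {∞}`: the least positive index at which `0`, `1` or `-1` occurs.
open Classical in
noncomputable def pIdx (b : ℕ → ℤ) : ℕ∞ :=
  if h : ∃ m, badIdx b m then (Nat.find h : ℕ∞) else ⊤

/-- `p⁽ⁿ⁾ → ∞` as `n → ∞`. -/
def PTendsToTop (b : ℕ → ℤ) : Prop :=
  ∀ N : ℕ, ∃ M : ℕ, ∀ n ≥ M, (N : ℕ∞) < pIdx (Phi^[n] b)

/-- `p = liminf pⁿ`, as a natural number (junk value if the liminf is `∞`). -/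
noncomputable def pLim (b : ℕ → ℤ) : ℕ :=
  (Filter.liminf (fun n => pIdx (Phi^[n] b)) Filter.atTop).toNat

/-- `q⁽ⁿ⁾ = |b⁽ⁿ⁾_{p-1}|`. -/
noncomputable def qSeq (b : ℕ → ℤ) (n : ℕ) : ℕ :=
  ((Phi^[n] b) (pLim b - 1)).natAbs

/-- Two continued fractions have the same tail. -/
def SameTail (b c : ℕ → ℤ) : Prop := ∃ r s : ℕ, ∀ k : ℕ, b (r + k) = c (s + k)

/-- `bstar` is the limit continued fraction: each coefficient of `Φⁿ(b)` stabilises on it. -/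
def EventuallyCoeff (b bstar : ℕ → ℤ) : Prop :=
  ∀ k : ℕ, ∃ N : ℕ, ∀ n ≥ N, Phi^[n] b k = bstar k

/-- The point of `ℝ∞` represented by the integer fraction `a/b` (`∞` when `b = 0`). -/
noncomputable def intPt (a b : ℤ) : OnePoint ℝ :=
  if b = 0 then ∞ else (((a : ℝ) / (b : ℝ)) : OnePoint ℝ)

/-- Adjacency in the Farey graph: `x = a/b`, `y = c/d` with `ad - bc = ±1`. -/
def FareyAdj (x y : OnePoint ℝ) : Prop :=
  ∃ a b c d : ℤ, x = intPt a b ∧ y = intPt c d ∧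
    (a * d - b * c = 1 ∨ a * d - b * c = -1)

/-- `x` is an extended rational, i.e. a member of `ℚ∞ = ℚ ∪ {∞} ⊆ ℝ∞`. -/
def IsExtRat (x : OnePoint ℝ) : Prop :=
  x = ∞ ∨ ∃ q : ℚ, x = ((q : ℝ) : OnePoint ℝ)

-- One step of the index-tracking sequence, for the current coefficient sequence `c`.
open Classical in
noncomputable def eStep (c : ℕ → ℤ) (e : ℕ) : Option ℕ :=
  if h : ∃ m, badIdx c m then
    let m := Nat.find h
    if c m = 0 then
      if e + 2 ≤ m then Option.some e
      else if e = m - 1 ∨ e = m then (none : Option ℕ)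
      else Option.some (e - 2)
    else
      if e + 2 ≤ m then Option.some e
      else if e = m - 1 then (none : Option ℕ)
      else Option.some (e - 1)
  else Option.some e

/-- The index-tracking sequence `e⁽⁰⁾(k), e⁽¹⁾(k), …` (`none` once it has terminated). -/
noncomputable def eSeq (b : ℕ → ℤ) (k : ℕ) : ℕ → Option ℕ
  | 0 => Option.some k
  | n + 1 => (eSeq b k n).bind (eStep (Phi^[n] b))

/-!
Consecutive convergents `v_n = A_n/C_n`, `v_{n+1}` are neighbours in the Farey graph, because
`(A_n, C_n)` and `(A_{n+1}, C_{n+1})` are the first columns of `M` and `M * !![b, -1; 1, 0]` for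
some `M ∈ SL(2, ℤ)`. Farey edges never cross (Plücker relation), so a path in the Farey graph
that keeps coming back to both sides of an edge visits one of its endpoints infinitely often.
If `(v_n)` diverges in the compact space `ℝ∞`, it has two cluster points with disjoint
neighbourhoods `U` and `W`. Every point of `ℝ∞` lies inside the union of two adjacent Farey arcs
contained in any prescribed neighbourhood (Stern–Brocot subdivision), so `(v_n)` visits some
endpoint in `U` and some endpoint in `W` infinitely often.
-/

open scoped MatrixGroups

lemma Matrix.SpecialLinearGroup.ne_zero_or_ne_zero_fin_two {R : Type*} [CommRing R] [Nontrivial R]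
    (M : SL(2, R)) : M 0 0 ≠ 0 ∨ M 1 0 ≠ 0 := by
  have h := M.det_coe
  rw [Matrix.det_fin_two] at h
  by_contra! h0
  simp [h0] at h

lemma isExtRat_intPt (a b : ℤ) : IsExtRat (intPt a b) := by
  unfold intPt IsExtRat
  split_ifs
  · exact Or.inl rfl
  · exact Or.inr ⟨a / b, by push_cast; rfl⟩

@[simp] lemma mob_infty (t : ℤ) : mob t ∞ = (t : ℝ) := rfl

@[simp] lemma mob_coe (t : ℤ) (x : ℝ) :
    mob t x = if x = 0 then ∞ else ((t - 1 / x : ℝ) : OnePoint ℝ) := rfl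

lemma mob_intPt (t a b : ℤ) (hab : a ≠ 0 ∨ b ≠ 0) : mob t (intPt a b) = intPt (t * a - b) a := by
  by_cases hb : b = 0
  · have ha : a ≠ 0 := by simpa [hb] using hab
    have ha' : (a : ℝ) ≠ 0 := by exact_mod_cast ha
    simp [intPt, hb, ha, ha']
  by_cases ha : a = 0
  · simp [intPt, ha, hb]
  · have ha' : (a : ℝ) ≠ 0 := by exact_mod_cast ha
    have hb' : (b : ℝ) ≠ 0 := by exact_mod_cast hb
    simp only [intPt, mob_coe, if_neg ha, if_neg hb, div_eq_zero_iff, ha', hb', or_self,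
      if_false, OnePoint.coe_eq_coe]
    field_simp
    push_cast
    ring

def cfStep (t : ℤ) : SL(2, ℤ) := ⟨!![t, -1; 1, 0], by simp [Matrix.det_fin_two]⟩

@[simp] lemma coe_cfStep (t : ℤ) : (cfStep t : Matrix (Fin 2) (Fin 2) ℤ) = !![t, -1; 1, 0] := rfl

/-- The matrix of `s₀ ∘ ⋯ ∘ s_m` for `l = [b₀, …, b_m]`. -/
def cfMat (l : List ℤ) : SL(2, ℤ) := (l.map cfStep).prod

lemma cfVal_eq_intPt (l : List ℤ) : cfVal l = intPt (cfMat l 0 0) (cfMat l 1 0) := by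
  induction l with
  | nil => simp [cfVal, cfMat, intPt]
  | cons t l ih =>
    have hcons : cfMat (t :: l) = cfStep t * cfMat l := List.prod_cons
    rw [cfVal, ih, mob_intPt _ _ _ (cfMat l).ne_zero_or_ne_zero_fin_two, hcons,
      Matrix.SpecialLinearGroup.coe_mul]
    simp [Matrix.mul_apply, Fin.sum_univ_two, sub_eq_add_neg]

lemma isExtRat_cfConv (b : ℕ → ℤ) (n : ℕ) : IsExtRat (cfConv b n) := by
  rw [cfConv, cfVal_eq_intPt]
  exact isExtRat_intPt _ _

lemma fareyAdj_cfConv_succ (b : ℕ → ℤ) (n : ℕ) : FareyAdj (cfConv b n) (cfConv b (n + 1)) := by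
  set M := cfMat ((List.range (n + 1)).map b)
  have hM : cfMat ((List.range (n + 2)).map b) = M * cfStep (b (n + 1)) := by
    rw [List.range_succ, List.map_append, cfMat, List.map_append, List.prod_append]
    simp [M, cfMat]
  refine ⟨M 0 0, M 1 0, M 0 0 * b (n + 1) + M 0 1, M 1 0 * b (n + 1) + M 1 1,
    cfVal_eq_intPt _, ?_, Or.inl ?_⟩
  · rw [cfConv, cfVal_eq_intPt, hM, Matrix.SpecialLinearGroup.coe_mul]
    simp [Matrix.mul_apply, Fin.sum_univ_two]
  · have h := M.det_coe
    rw [Matrix.det_fin_two] at h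
    linear_combination h

lemma frequently_eq_zero_of_frequently_nonneg_of_frequently_neg {α : Type*} [LinearOrder α]
    [Zero α] {S : ℕ → α} (hS : ∀ n, ¬ (0 < S n ∧ S (n + 1) < 0))
    (h₁ : ∃ᶠ n in atTop, 0 ≤ S n) (h₂ : ∃ᶠ n in atTop, S n < 0) :
    ∃ᶠ n in atTop, S n = 0 := by
  refine frequently_atTop.2 fun N ↦ ?_
  obtain ⟨m, hmN, hm⟩ := frequently_atTop.1 h₁ N
  obtain ⟨k, hkm, hk⟩ := frequently_atTop.1 h₂ m
  obtain ⟨j, hj, hj1⟩ := Nat.exists_not_and_succ_of_not_zero_of_exists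
    (p := fun j ↦ S (m + j) < 0) (by simpa using hm) ⟨k - m, by rwa [Nat.add_sub_cancel' hkm]⟩
  refine ⟨m + j, by omega, le_antisymm ?_ (not_lt.1 hj)⟩
  exact not_lt.1 fun hpos ↦ hS (m + j) ⟨hpos, hj1⟩

/-- The edge `a/b — c/d` of the Farey graph. -/
structure FareyEdge where
  a : ℤ
  b : ℤ
  c : ℤ
  d : ℤ
  det_eq : a * d - b * c = 1 ∨ a * d - b * c = -1

namespace FareyEdge

variable (e : FareyEdge)

/-- `det((a, b), z) * det(z, (c, d))` for `z = (t, 1)` and `z = (1, 0)`: its sign tells on which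
of the two arcs of `ℝ∞ \ {a/b, c/d}` the point `z` lies. -/
noncomputable def side (z : OnePoint ℝ) : ℝ :=
  z.elim (-(e.b * e.d : ℝ)) fun t ↦ (e.a - e.b * t) * (e.d * t - e.c)

@[simp] lemma side_infty : e.side ∞ = -(e.b * e.d : ℝ) := rfl

@[simp] lemma side_coe (t : ℝ) : e.side t = (e.a - e.b * t) * (e.d * t - e.c) := rfl

lemma eq_or_eq_of_side_eq_zero {z : OnePoint ℝ} (hz : e.side z = 0) :
    z = intPt e.a e.b ∨ z = intPt e.c e.d := by
  have hab : e.b = 0 → e.a ≠ 0 := fun hb ha ↦ by have := e.det_eq; simp [ha, hb] at this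
  have hcd : e.d = 0 → e.c ≠ 0 := fun hd hc ↦ by have := e.det_eq; simp [hc, hd] at this
  induction z using OnePoint.rec with
  | infty =>
    simp only [side_infty, neg_eq_zero, mul_eq_zero, Int.cast_eq_zero] at hz
    rcases hz with hb | hd
    · exact Or.inl (by simp [intPt, hb])
    · exact Or.inr (by simp [intPt, hd])
  | coe t =>
    simp only [side_coe, mul_eq_zero, sub_eq_zero] at hz
    rcases hz with h | h
    · by_cases hb : e.b = 0
      · simp [hb, hab hb] at h
      · exact Or.inl (by simp [intPt, hb, h])
    · by_cases hd : e.d = 0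
      · simp [hd, eq_comm, hcd hd] at h
      · exact Or.inr (by simp [intPt, hd, ← h])

lemma exists_pos_side_intPt_mul {p q : ℤ} (hpq : p ≠ 0 ∨ q ≠ 0) : ∃ w : ℝ, 0 < w ∧
    e.side (intPt p q) * w = ((e.a * q - e.b * p) * (p * e.d - q * e.c) : ℤ) := by
  by_cases hq : q = 0
  · have hp : p ≠ 0 := by simpa [hq] using hpq
    refine ⟨p ^ 2, by positivity, ?_⟩
    rw [intPt, if_pos hq, side_infty, hq]
    push_cast
    ring
  · have hq' : (q : ℝ) ≠ 0 := by exact_mod_cast hq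
    refine ⟨q ^ 2, by positivity, ?_⟩
    rw [intPt, if_neg hq, side_coe]
    push_cast
    field_simp

/-- The Farey edges `a/b — c/d` and `p/q — r/s` do not cross. -/
lemma not_cross {p q r s : ℤ} (hpqrs : p * s - q * r = 1 ∨ p * s - q * r = -1) :
    ¬ (0 < (e.a * q - e.b * p) * (p * e.d - q * e.c) ∧
      (e.a * s - e.b * r) * (r * e.d - s * e.c) < 0) := by
  rintro ⟨hpos, hneg⟩
  set m := (e.a * q - e.b * p) * (r * e.d - s * e.c)
  set n := (e.a * s - e.b * r) * (p * e.d - q * e.c)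
  -- Plücker relation: `m - n = ±1`, whereas `m * n < 0` would force `|m - n| ≥ 2`.
  have hmn : m - n = -((e.a * e.d - e.b * e.c) * (p * s - q * r)) := by ring
  have hmn' : m * n < 0 := by
    have : m * n = ((e.a * q - e.b * p) * (p * e.d - q * e.c)) *
        ((e.a * s - e.b * r) * (r * e.d - s * e.c)) := by ring
    rw [this]
    exact mul_neg_of_pos_of_neg hpos hneg
  have hunit : m - n = 1 ∨ m - n = -1 := by
    rcases e.det_eq with h | h <;> rcases hpqrs with h' | h' <;> simp [hmn, h, h']
  rcases mul_neg_iff.1 hmn' with ⟨hm, hn⟩ | ⟨hm, hn⟩ <;> omega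

lemma not_side_pos_and_neg {z w : OnePoint ℝ} (hzw : FareyAdj z w) :
    ¬ (0 < e.side z ∧ e.side w < 0) := by
  obtain ⟨p, q, r, s, rfl, rfl, hdet⟩ := hzw
  have hpq : p ≠ 0 ∨ q ≠ 0 := by
    by_contra! h
    rcases hdet with hd | hd <;> simp [h.1, h.2] at hd
  have hrs : r ≠ 0 ∨ s ≠ 0 := by
    by_contra! h
    rcases hdet with hd | hd <;> simp [h.1, h.2] at hd
  obtain ⟨w₁, hw₁, hz⟩ := e.exists_pos_side_intPt_mul hpq
  obtain ⟨w₂, hw₂, hw⟩ := e.exists_pos_side_intPt_mul hrs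
  rintro ⟨hpos, hneg⟩
  refine e.not_cross hdet ⟨?_, ?_⟩
  · exact_mod_cast hz ▸ mul_pos hpos hw₁
  · exact_mod_cast hw ▸ mul_neg_of_neg_of_pos hneg hw₂

lemma exists_side_eq_zero_frequently_eq {v : ℕ → OnePoint ℝ}
    (hv : ∀ n, FareyAdj (v n) (v (n + 1)))
    (h₁ : ∃ᶠ n in atTop, 0 ≤ e.side (v n)) (h₂ : ∃ᶠ n in atTop, e.side (v n) < 0) :
    ∃ u, e.side u = 0 ∧ ∃ᶠ n in atTop, v n = u := by
  have h₀ := frequently_eq_zero_of_frequently_nonneg_of_frequently_neg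
    (fun n ↦ e.not_side_pos_and_neg (hv n)) h₁ h₂
  have key : ∃ᶠ n in atTop, (v n = intPt e.a e.b ∧ e.side (intPt e.a e.b) = 0) ∨
      (v n = intPt e.c e.d ∧ e.side (intPt e.c e.d) = 0) :=
    h₀.mono fun n hn ↦ (e.eq_or_eq_of_side_eq_zero hn).imp
      (fun h ↦ ⟨h, h ▸ hn⟩) (fun h ↦ ⟨h, h ▸ hn⟩)
  rcases frequently_or_distrib.1 key with h | h
  · exact ⟨_, h.exists.choose_spec.2, h.mono fun n hn ↦ hn.1⟩
  · exact ⟨_, h.exists.choose_spec.2, h.mono fun n hn ↦ hn.1⟩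
lemma div_lt_div (hb : 0 < e.b) (hd : 0 < e.d) (hdet : e.a * e.d - e.b * e.c = -1) :
    (e.a / e.b : ℝ) < e.c / e.d := by
  rw [div_lt_div_iff₀ (by exact_mod_cast hb) (by exact_mod_cast hd)]
  exact_mod_cast (by linarith : e.a * e.d < e.c * e.b)

lemma side_coe_eq (hb : e.b ≠ 0) (hd : e.d ≠ 0) (t : ℝ) :
    e.side t = e.b * e.d * ((e.a / e.b - t) * (t - e.c / e.d)) := by
  have hb' : (e.b : ℝ) ≠ 0 := by exact_mod_cast hb
  have hd' : (e.d : ℝ) ≠ 0 := by exact_mod_cast hd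
  rw [side_coe]
  field_simp

lemma side_coe_nonneg (hb : 0 < e.b) (hd : 0 < e.d) {t : ℝ}
    (ht : t ∈ Set.Icc (e.a / e.b : ℝ) (e.c / e.d)) : 0 ≤ e.side t := by
  rw [e.side_coe_eq hb.ne' hd.ne']
  have hbd : (0 : ℝ) < e.b * e.d := by positivity
  exact mul_nonneg hbd.le
    (mul_nonneg_of_nonpos_of_nonpos (by linarith [ht.1]) (by linarith [ht.2]))

lemma side_coe_neg (hb : 0 < e.b) (hd : 0 < e.d) (hdet : e.a * e.d - e.b * e.c = -1) {t : ℝ}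
    (ht : t ∉ Set.Icc (e.a / e.b : ℝ) (e.c / e.d)) : e.side t < 0 := by
  rw [e.side_coe_eq hb.ne' hd.ne']
  have hbd : (0 : ℝ) < e.b * e.d := by positivity
  have hxy := e.div_lt_div hb hd hdet
  refine mul_neg_of_pos_of_neg hbd ?_
  simp only [Set.mem_Icc, not_and_or, not_le] at ht
  rcases ht with ht | ht
  · exact mul_neg_of_pos_of_neg (by linarith) (by linarith)
  · exact mul_neg_of_neg_of_pos (by linarith) (by linarith)

lemma side_infty_neg (hb : 0 < e.b) (hd : 0 < e.d) : e.side ∞ < 0 := by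
  rw [side_infty, neg_neg_iff_pos]
  positivity

end FareyEdge

/-- Each step keeps the half of the chain `a/b < p/q < c/d` containing `g` and inserts a mediant
into it or, when `g = p/q`, replaces both outer ends by their mediants with `p/q`; in each case
`b * q` and `q * d` grow. -/
lemma exists_farey_chain_mul_ge (g : ℝ) (n : ℕ) : ∃ a b p q c d : ℤ, 0 < b ∧ 0 < q ∧ 0 < d ∧
    a * q - b * p = -1 ∧ p * d - q * c = -1 ∧ (a : ℝ) < b * g ∧ (d : ℝ) * g < c ∧
    n ≤ b * q ∧ n ≤ q * d := by
  induction n with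
  | zero =>
    refine ⟨⌊g⌋ - 1, 1, ⌊g⌋, 1, ⌊g⌋ + 1, 1, one_pos, one_pos, one_pos, by ring, by ring, ?_, ?_,
      by norm_num, by norm_num⟩
    · push_cast
      linarith [Int.floor_le g]
    · push_cast
      linarith [Int.lt_floor_add_one g]
  | succ n ih =>
    obtain ⟨a, b, p, q, c, d, hb, hq, hd, h₁, h₂, ha, hc, hbq, hqd⟩ := ih
    rcases lt_trichotomy ((q : ℝ) * g) p with hg | hg | hg
    · refine ⟨a, b, a + p, b + q, p, q, hb, by omega, hq, by linear_combination h₁,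
        by linear_combination h₁, ha, hg, by push_cast; nlinarith, by push_cast; nlinarith⟩
    · refine ⟨a + p, b + q, p, q, p + c, q + d, by omega, hq, by omega, by linear_combination h₁,
        by linear_combination h₂, by push_cast; linarith, by push_cast; linarith,
        by push_cast; nlinarith, by push_cast; nlinarith⟩
    · refine ⟨p, q, p + c, q + d, c, d, hq, by omega, hd, by linear_combination h₂,
        by linear_combination h₂, hg, hc, by push_cast; nlinarith, by push_cast; nlinarith⟩

lemma exists_farey_chain_sub_lt (g : ℝ) {ε : ℝ} (hε : 0 < ε) : ∃ a b p q c d : ℤ,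
    0 < b ∧ 0 < q ∧ 0 < d ∧ a * q - b * p = -1 ∧ p * d - q * c = -1 ∧
    (a / b : ℝ) < g ∧ g < c / d ∧ (c / d : ℝ) - a / b < ε := by
  obtain ⟨n, hn⟩ := exists_nat_gt (2 / ε)
  obtain ⟨a, b, p, q, c, d, hb, hq, hd, h₁, h₂, ha, hc, hbq, hqd⟩ := exists_farey_chain_mul_ge g n
  have hb' : (0 : ℝ) < b := by exact_mod_cast hb
  have hd' : (0 : ℝ) < d := by exact_mod_cast hd
  refine ⟨a, b, p, q, c, d, hb, hq, hd, h₁, h₂, by rw [div_lt_iff₀ hb']; linarith,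
    by rw [lt_div_iff₀ hd']; linarith, ?_⟩
  have hn0 : (0 : ℝ) < n := (div_pos two_pos hε).trans hn
  have h₁' : (a : ℝ) * q - b * p = -1 := by exact_mod_cast h₁
  have h₂' : (p : ℝ) * d - q * c = -1 := by exact_mod_cast h₂
  have hsplit : (c / d : ℝ) - a / b = 1 / (b * q) + 1 / (q * d) := by
    field_simp
    linear_combination (-(d : ℝ)) * h₁' - b * h₂'
  have hbq' : 1 / ((b : ℝ) * q) ≤ 1 / n := one_div_le_one_div_of_le hn0 (by exact_mod_cast hbq)
  have hqd' : 1 / ((q : ℝ) * d) ≤ 1 / n := one_div_le_one_div_of_le hn0 (by exact_mod_cast hqd)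
  have h2n : 2 / (n : ℝ) < ε := by rwa [div_lt_comm₀ hn0 hε]
  linarith [show 2 / (n : ℝ) = 1 / n + 1 / n by ring]

lemma exists_fareyEdge_pair_coe {g : ℝ} {U : Set (OnePoint ℝ)} (hU : U ∈ 𝓝 (g : OnePoint ℝ)) :
    ∃ e₁ e₂ : FareyEdge, {z | 0 ≤ e₁.side z ∨ 0 ≤ e₂.side z} ∈ 𝓝 (g : OnePoint ℝ) ∧
      ∀ z ∉ U, e₁.side z < 0 ∧ e₂.side z < 0 := by
  rw [OnePoint.nhds_coe_eq, mem_map, Metric.mem_nhds_iff] at hU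
  obtain ⟨ε, hε, hball⟩ := hU
  obtain ⟨a, b, p, q, c, d, hb, hq, hd, h₁, h₂, hx, hy, hwidth⟩ := exists_farey_chain_sub_lt g hε
  let e₁ : FareyEdge := ⟨a, b, p, q, Or.inr h₁⟩
  let e₂ : FareyEdge := ⟨p, q, c, d, Or.inr h₂⟩
  have hxm : (a / b : ℝ) < p / q := e₁.div_lt_div hb hq h₁
  have hmy : (p / q : ℝ) < c / d := e₂.div_lt_div hq hd h₂
  refine ⟨e₁, e₂, ?_, fun z hz ↦ ?_⟩
  · refine mem_of_superset ((OnePoint.isOpen_image_coe.2 isOpen_Ioo).mem_nhds ⟨g, ⟨hx, hy⟩, rfl⟩) ?_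
    rintro _ ⟨t, ht, rfl⟩
    rcases le_total t (p / q) with htm | htm
    · exact Or.inl (e₁.side_coe_nonneg hb hq ⟨ht.1.le, htm⟩)
    · exact Or.inr (e₂.side_coe_nonneg hq hd ⟨htm, ht.2.le⟩)
  · induction z using OnePoint.rec with
    | infty => exact ⟨e₁.side_infty_neg hb hq, e₂.side_infty_neg hq hd⟩
    | coe t =>
      have ht : t ∉ Set.Icc (a / b : ℝ) (c / d) := fun ht ↦ hz <| hball <| by
        rw [Metric.mem_ball, Real.dist_eq, abs_lt]
        constructor <;> linarith [ht.1, ht.2]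
      exact ⟨e₁.side_coe_neg hb hq h₁ fun h ↦ ht ⟨h.1, h.2.trans hmy.le⟩,
        e₂.side_coe_neg hq hd h₂ fun h ↦ ht ⟨hxm.le.trans h.1, h.2⟩⟩

lemma OnePoint.mem_nhds_infty_iff_real {s : Set (OnePoint ℝ)} :
    s ∈ 𝓝 ∞ ↔ ∞ ∈ s ∧ (∀ᶠ t : ℝ in atBot, (t : OnePoint ℝ) ∈ s) ∧
      ∀ᶠ t : ℝ in atTop, (t : OnePoint ℝ) ∈ s := by
  rw [OnePoint.nhds_infty_eq, coclosedCompact_eq_cocompact, cocompact_eq_atBot_atTop]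
  simp [and_comm]

lemma exists_fareyEdge_pair_infty {U : Set (OnePoint ℝ)} (hU : U ∈ 𝓝 (∞ : OnePoint ℝ)) :
    ∃ e₁ e₂ : FareyEdge, {z | 0 ≤ e₁.side z ∨ 0 ≤ e₂.side z} ∈ 𝓝 ∞ ∧
      ∀ z ∉ U, e₁.side z < 0 ∧ e₂.side z < 0 := by
  obtain ⟨hinf, hbot, htop⟩ := OnePoint.mem_nhds_infty_iff_real.1 hU
  obtain ⟨M₁, hM₁⟩ := eventually_atBot.1 hbot
  obtain ⟨M₂, hM₂⟩ := eventually_atTop.1 htop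
  obtain ⟨N, hN⟩ := exists_int_gt (max (-M₁) M₂)
  have hM₁N : -M₁ < N := (le_max_left _ _).trans_lt hN
  have hM₂N : M₂ < N := (le_max_right _ _).trans_lt hN
  -- the edges `N — ∞` and `∞ — -N`
  let e₁ : FareyEdge := ⟨N, 1, 1, 0, Or.inr (by ring)⟩
  let e₂ : FareyEdge := ⟨-1, 0, -N, 1, Or.inr (by ring)⟩
  have h₁ (t : ℝ) : e₁.side t = t - N := by simp only [e₁, FareyEdge.side_coe]; push_cast; ring
  have h₂ (t : ℝ) : e₂.side t = -(t + N) := by simp only [e₂, FareyEdge.side_coe]; push_cast; ring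
  refine ⟨e₁, e₂, OnePoint.mem_nhds_infty_iff_real.2 ⟨Or.inl (by simp [e₁]), ?_, ?_⟩, fun z hz ↦ ?_⟩
  · filter_upwards [eventually_le_atBot (-N : ℝ)] with t ht
    exact Or.inr (by rw [h₂]; linarith)
  · filter_upwards [eventually_ge_atTop (N : ℝ)] with t ht
    exact Or.inl (by rw [h₁]; linarith)
  · induction z using OnePoint.rec with
    | infty => exact absurd hinf hz
    | coe t =>
      have ht₁ : M₁ < t := lt_of_not_ge fun h ↦ hz (hM₁ t h)
      have ht₂ : t < M₂ := lt_of_not_ge fun h ↦ hz (hM₂ t h)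
      rw [h₁, h₂]
      constructor <;> linarith

lemma exists_fareyEdge_pair {α : OnePoint ℝ} {U : Set (OnePoint ℝ)} (hU : U ∈ 𝓝 α) :
    ∃ e₁ e₂ : FareyEdge, {z | 0 ≤ e₁.side z ∨ 0 ≤ e₂.side z} ∈ 𝓝 α ∧
      ∀ z ∉ U, e₁.side z < 0 ∧ e₂.side z < 0 := by
  induction α using OnePoint.rec with
  | infty => exact exists_fareyEdge_pair_infty hU
  | coe g => exact exists_fareyEdge_pair_coe hU

lemma exists_mem_frequently_eq {v : ℕ → OnePoint ℝ} (hv : ∀ n, FareyAdj (v n) (v (n + 1)))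
    {α : OnePoint ℝ} (hα : MapClusterPt α atTop v) {U : Set (OnePoint ℝ)} (hU : U ∈ 𝓝 α)
    (hout : ∃ᶠ n in atTop, v n ∉ U) : ∃ u ∈ U, ∃ᶠ n in atTop, v n = u := by
  obtain ⟨e₁, e₂, hnear, hfar⟩ := exists_fareyEdge_pair hU
  have key (e : FareyEdge) (he : ∀ z ∉ U, e.side z < 0) (hin : ∃ᶠ n in atTop, 0 ≤ e.side (v n)) :
      ∃ u ∈ U, ∃ᶠ n in atTop, v n = u := by
    obtain ⟨u, hu0, hu⟩ := e.exists_side_eq_zero_frequently_eq hv hin (hout.mono fun n ↦ he _)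
    exact ⟨u, by_contra fun huU ↦ (he u huU).ne hu0, hu⟩
  rcases frequently_or_distrib.1 (hα.frequently hnear) with h | h
  · exact key e₁ (fun z hz ↦ (hfar z hz).1) h
  · exact key e₂ (fun z hz ↦ (hfar z hz).2) h

lemma exists_ne_frequently_eq {v : ℕ → OnePoint ℝ} (hv : ∀ n, FareyAdj (v n) (v (n + 1)))
    {α β : OnePoint ℝ} (hα : MapClusterPt α atTop v) (hβ : MapClusterPt β atTop v) (hαβ : α ≠ β) :
    ∃ u w, u ≠ w ∧ (∃ᶠ n in atTop, v n = u) ∧ ∃ᶠ n in atTop, v n = w := by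
  obtain ⟨U, W, hU, hW, hαU, hβW, hUW⟩ := t2_separation hαβ
  have hU' := hU.mem_nhds hαU
  have hW' := hW.mem_nhds hβW
  obtain ⟨u, huU, hu⟩ := exists_mem_frequently_eq hv hα hU'
    ((hβ.frequently hW').mono fun n hn ↦ hUW.notMem_of_mem_right hn)
  obtain ⟨w, hwW, hw⟩ := exists_mem_frequently_eq hv hβ hW'
    ((hα.frequently hU').mono fun n hn ↦ hUW.notMem_of_mem_left hn)
  exact ⟨u, w, hUW.ne_of_mem huU hwW, hu, hw⟩

/-- A continued fraction `[b₀, b₁, …]` converges if and only if there are not two distinct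
extended rationals that each appear infinitely often among its convergents. -/
theorem stmt6 (b : ℕ → ℤ) :
    (∃ L : OnePoint ℝ, Filter.Tendsto (cfConv b) Filter.atTop (nhds L)) ↔
      ¬ ∃ u w : OnePoint ℝ, IsExtRat u ∧ IsExtRat w ∧ u ≠ w ∧
        {n : ℕ | cfConv b n = u}.Infinite ∧ {n : ℕ | cfConv b n = w}.Infinite := by
  simp only [← Nat.frequently_atTop_iff_infinite]
  constructor
  · rintro ⟨L, hL⟩ ⟨u, w, -, -, huw, hu, hw⟩
    exact huw ((tendsto_nhds_unique_of_frequently_eq hL tendsto_const_nhds hu).symm.trans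
      (tendsto_nhds_unique_of_frequently_eq hL tendsto_const_nhds hw))
  · intro hno
    obtain ⟨α, hα⟩ := exists_clusterPt_of_compactSpace (map (cfConv b) atTop)
    refine ⟨α, tendsto_nhds_of_unique_mapClusterPt fun β hβ ↦ by_contra fun hβα ↦ hno ?_⟩
    obtain ⟨u, w, huw, hu, hw⟩ := exists_ne_frequently_eq (fareyAdj_cfConv_succ b) hβ hα hβα
    obtain ⟨m, rfl⟩ := hu.exists
    obtain ⟨n, rfl⟩ := hw.exists
    exact ⟨_, _, isExtRat_cfConv b m, isExtRat_cfConv b n, huw, hu, hw⟩
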